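/- arXiv:2307.00675 — 2 statements merged into one kernel-verified Lean document; each statement's English description precedes it below -/
import Mathlib

section
/- Let E be a real inner product space, Δt > 0, λ ≥ 0, ε ∈ (0,1), c ≥ 0, and let b, w̃, a ∈ E satisfy (1/Δt) · ⟨w̃ − b, w̃⟩ + λ‖w̃‖² ≤ 0 and ‖a − w̃‖ ≤ c. Then ‖a‖² ≤ ‖b‖² / ((1 − ε)(1 + 2Δt·λ)) + c²/ε. -/
open scoped RealInnerProductSpace

theorem stmt_9 {E : Type*} [NormedAddCommGroup E] [InnerProductSpace ℝ E]
    (Δt : ℝ) (hΔt : 0 < Δt) (lam : ℝ) (hlam : 0 ≤ lam)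
    (ε : ℝ) (hε : ε ∈ Set.Ioo (0 : ℝ) 1) (c : ℝ) (hc : 0 ≤ c)
    (b wTilde a : E)
    (h1 : (1 / Δt) * ⟪wTilde - b, wTilde⟫ + lam * ‖wTilde‖ ^ 2 ≤ 0)
    (h2 : ‖a - wTilde‖ ≤ c) :
    ‖a‖ ^ 2 ≤ ‖b‖ ^ 2 / ((1 - ε) * (1 + 2 * Δt * lam)) + c ^ 2 / ε := by
  obtain ⟨hε0, hε1⟩ := hε
  have hcs : ⟪b, wTilde⟫ ≤ ‖b‖ * ‖wTilde‖ := real_inner_le_norm b wTilde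
  have hexp : ⟪wTilde - b, wTilde⟫ = ‖wTilde‖ ^ 2 - ⟪b, wTilde⟫ := by
    rw [inner_sub_left, real_inner_self_eq_norm_sq]
  have hlow : (‖wTilde‖ ^ 2 - ‖b‖ ^ 2) / 2 ≤ ⟪wTilde - b, wTilde⟫ := by
    rw [hexp]; nlinarith [sq_nonneg (‖b‖ - ‖wTilde‖)]
  have hmul : ⟪wTilde - b, wTilde⟫ + Δt * lam * ‖wTilde‖ ^ 2 ≤ 0 := by
    have := mul_le_mul_of_nonneg_left h1 hΔt.le
    field_simp at this
    nlinarith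
  have hkey : (1 + 2 * Δt * lam) * ‖wTilde‖ ^ 2 ≤ ‖b‖ ^ 2 := by nlinarith
  have htri : ‖a‖ ≤ ‖wTilde‖ + c := by
    calc ‖a‖ = ‖wTilde + (a - wTilde)‖ := by rw [add_sub_cancel]
    _ ≤ ‖wTilde‖ + ‖a - wTilde‖ := norm_add_le _ _
    _ ≤ ‖wTilde‖ + c := by linarith
  have hpos : 0 < (1 - ε) * (1 + 2 * Δt * lam) := by
    have h1e : (0:ℝ) < 1 - ε := by linarith
    positivity
  rw [div_add_div _ _ (ne_of_gt hpos) (ne_of_gt hε0), le_div_iff₀ (by positivity)]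
  have hwn : 0 ≤ ‖wTilde‖ := norm_nonneg _
  have han : 0 ≤ ‖a‖ := norm_nonneg _
  set w := ‖wTilde‖ with hw
  set K := 1 + 2 * Δt * lam with hK
  have hK1 : (1:ℝ) ≤ K := by simp [hK]; positivity
  have heps : ε * (1 - ε) * (w + c) ^ 2 ≤ ε * w ^ 2 + (1 - ε) * c ^ 2 := by
    nlinarith [sq_nonneg (ε * w - (1 - ε) * c)]
  have hstep : ε * (1 - ε) * K * (w + c) ^ 2 ≤ ε * (K * w ^ 2) + (1 - ε) * K * c ^ 2 := by
    nlinarith [sq_nonneg (w + c)]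
  have ha2 : ‖a‖ ^ 2 ≤ (w + c) ^ 2 := by nlinarith
  linarith [mul_le_mul_of_nonneg_left hkey hε0.le,
    mul_le_mul_of_nonneg_left ha2 (by nlinarith : (0:ℝ) ≤ ε * (1 - ε) * K)]
end

section
/- Let E be a real inner product space, Δt > 0, λ ≥ 0, ε ∈ (0,1), χ ∈ (0,1), let w : ℕ → E and w̃ : ℕ → E be sequences, and let C : ℕ → ℝ be a sequence of nonnegative reals such that, for every n, (1/Δt) · ⟨w̃(n+1) − w(n), w̃(n+1)⟩ + λ‖w̃(n+1)‖² ≤ 0 and ‖w(n+1) − w̃(n+1)‖ ≤ χ · C(n+1). Set K = 1 / ((1 − ε)(1 + 2Δt·λ)). Then for every n, ‖w(n+1)‖² ≤ K^{n+1} · ‖w(0)‖² + (χ²/ε) · ∑_{i=1}^{n+1} K^{n+1−i} · C(i)². -/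
open scoped RealInnerProductSpace

theorem stmt_11 {E : Type*} [NormedAddCommGroup E] [InnerProductSpace ℝ E]
    (Δt : ℝ) (hΔt : 0 < Δt) (lam : ℝ) (hlam : 0 ≤ lam)
    (ε : ℝ) (hε : ε ∈ Set.Ioo (0 : ℝ) 1) (χ : ℝ) (hχ : χ ∈ Set.Ioo (0 : ℝ) 1)
    (w wTilde : ℕ → E) (C : ℕ → ℝ) (hC : ∀ n, 0 ≤ C n)
    (h1 : ∀ n : ℕ, (1 / Δt) * ⟪wTilde (n + 1) - w n, wTilde (n + 1)⟫ + lam * ‖wTilde (n + 1)‖ ^ 2 ≤ 0)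
    (h2 : ∀ n : ℕ, ‖w (n + 1) - wTilde (n + 1)‖ ≤ χ * C (n + 1))
    (K : ℝ) (hKdef : K = 1 / ((1 - ε) * (1 + 2 * Δt * lam))) :
    ∀ n : ℕ, ‖w (n + 1)‖ ^ 2 ≤ K ^ (n + 1) * ‖w 0‖ ^ 2
      + (χ ^ 2 / ε) * ∑ i ∈ Finset.Icc 1 (n + 1), K ^ (n + 1 - i) * C i ^ 2 := by
  obtain ⟨hε0, hε1⟩ := hε
  obtain ⟨hχ0, hχ1⟩ := hχ
  have h1ε : (0:ℝ) < 1 - ε := by linarith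
  have hpos1 : (0:ℝ) < 1 + 2 * Δt * lam := by nlinarith
  have hden : 0 < (1 - ε) * (1 + 2 * Δt * lam) := mul_pos h1ε hpos1
  have hK0 : 0 < K := by rw [hKdef]; positivity
  -- one-step estimate
  have step : ∀ n : ℕ, ‖w (n + 1)‖ ^ 2 ≤ K * ‖w n‖ ^ 2 + (χ ^ 2 / ε) * C (n + 1) ^ 2 := by
    intro n
    -- inner product identity
    have hid : ⟪wTilde (n + 1) - w n, wTilde (n + 1)⟫ =
        (‖wTilde (n + 1)‖ ^ 2 - ‖w n‖ ^ 2 + ‖wTilde (n + 1) - w n‖ ^ 2) / 2 := by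
      have hns := norm_sub_sq_real (wTilde (n + 1)) (w n)
      have hil := inner_sub_left (𝕜 := ℝ) (wTilde (n + 1)) (w n) (wTilde (n + 1))
      have h1' := real_inner_self_eq_norm_sq (wTilde (n + 1))
      have h2' := real_inner_comm (w n) (wTilde (n + 1))
      rw [hil, h1']
      linarith [hns, h2']
    have hA : (1 + 2 * Δt * lam) * ‖wTilde (n + 1)‖ ^ 2 ≤ ‖w n‖ ^ 2 := by
      have h := h1 n
      rw [hid, one_div, inv_mul_eq_div, div_div] at h
      have h2t : (0:ℝ) < 2 * Δt := by linarith
      have h' : ‖wTilde (n + 1)‖ ^ 2 - ‖w n‖ ^ 2 + ‖wTilde (n + 1) - w n‖ ^ 2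
          ≤ -(lam * ‖wTilde (n + 1)‖ ^ 2) * (2 * Δt) := by
        rw [← div_le_iff₀ h2t]
        have hc : (‖wTilde (n + 1)‖ ^ 2 - ‖w n‖ ^ 2 + ‖wTilde (n + 1) - w n‖ ^ 2) / (2 * Δt)
            = (‖wTilde (n + 1)‖ ^ 2 - ‖w n‖ ^ 2 + ‖wTilde (n + 1) - w n‖ ^ 2) / (Δt * 2) := by
          rw [mul_comm]
        rw [hc]
        linarith
      nlinarith [h', sq_nonneg ‖wTilde (n + 1) - w n‖]
    -- triangle + weighted Young
    have htri : ‖w (n + 1)‖ ≤ ‖wTilde (n + 1)‖ + χ * C (n + 1) := by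
      calc ‖w (n + 1)‖ = ‖wTilde (n + 1) + (w (n + 1) - wTilde (n + 1))‖ := by
            congr 1; abel
        _ ≤ ‖wTilde (n + 1)‖ + ‖w (n + 1) - wTilde (n + 1)‖ := norm_add_le _ _
        _ ≤ ‖wTilde (n + 1)‖ + χ * C (n + 1) := by linarith [h2 n]
    have ha : 0 ≤ ‖wTilde (n + 1)‖ := norm_nonneg _
    have hb : 0 ≤ χ * C (n + 1) := mul_nonneg hχ0.le (hC _)
    have hw1 : 0 ≤ ‖w (n + 1)‖ := norm_nonneg _
    have hyoung : ‖w (n + 1)‖ ^ 2 ≤ ‖wTilde (n + 1)‖ ^ 2 / (1 - ε)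
        + (χ * C (n + 1)) ^ 2 / ε := by
      have hsq : ‖w (n + 1)‖ ^ 2 ≤ (‖wTilde (n + 1)‖ + χ * C (n + 1)) ^ 2 := by
        nlinarith
      have hy : (‖wTilde (n + 1)‖ + χ * C (n + 1)) ^ 2 ≤
          ‖wTilde (n + 1)‖ ^ 2 / (1 - ε) + (χ * C (n + 1)) ^ 2 / ε := by
        rw [div_add_div _ _ (ne_of_gt h1ε) (ne_of_gt hε0),
          le_div_iff₀ (mul_pos h1ε hε0)]
        nlinarith [sq_nonneg (ε * ‖wTilde (n + 1)‖ - (1 - ε) * (χ * C (n + 1)))]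
      linarith
    have hKw : ‖wTilde (n + 1)‖ ^ 2 / (1 - ε) ≤ K * ‖w n‖ ^ 2 := by
      have h1' : ‖wTilde (n + 1)‖ ^ 2 ≤ ‖w n‖ ^ 2 / (1 + 2 * Δt * lam) := by
        rw [le_div_iff₀ hpos1]; nlinarith [hA]
      calc ‖wTilde (n + 1)‖ ^ 2 / (1 - ε)
            ≤ (‖w n‖ ^ 2 / (1 + 2 * Δt * lam)) / (1 - ε) := by
            gcongr
        _ = K * ‖w n‖ ^ 2 := by
            rw [hKdef, div_div, one_div_mul_eq_div, mul_comm (1 + 2 * Δt * lam)]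
    have heq : (χ * C (n + 1)) ^ 2 / ε = (χ ^ 2 / ε) * C (n + 1) ^ 2 := by ring
    linarith [hyoung, hKw, heq.le, heq.ge]
  intro n
  induction n with
  | zero =>
    simpa using step 0
  | succ m ih =>
    have hstep := step (m + 1)
    have hmul := mul_le_mul_of_nonneg_left ih (le_of_lt hK0)
    have hsum : ∑ i ∈ Finset.Icc 1 (m + 1 + 1), K ^ (m + 1 + 1 - i) * C i ^ 2
        = K * ∑ i ∈ Finset.Icc 1 (m + 1), K ^ (m + 1 - i) * C i ^ 2 + C (m + 2) ^ 2 := by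
      rw [Finset.sum_Icc_succ_top (by omega : 1 ≤ m + 1 + 1), Finset.mul_sum]
      simp only [Nat.sub_self, pow_zero, one_mul]
      congr 1
      apply Finset.sum_congr rfl
      intro i hi
      simp only [Finset.mem_Icc] at hi
      have : m + 1 + 1 - i = (m + 1 - i) + 1 := by omega
      rw [this, pow_succ]
      ring
    calc ‖w (m + 1 + 1)‖ ^ 2 ≤ K * ‖w (m + 1)‖ ^ 2 + (χ ^ 2 / ε) * C (m + 2) ^ 2 := hstep
      _ ≤ K * (K ^ (m + 1) * ‖w 0‖ ^ 2
            + (χ ^ 2 / ε) * ∑ i ∈ Finset.Icc 1 (m + 1), K ^ (m + 1 - i) * C i ^ 2)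
          + (χ ^ 2 / ε) * C (m + 2) ^ 2 := by linarith
      _ = K ^ (m + 1 + 1) * ‖w 0‖ ^ 2
          + (χ ^ 2 / ε) * ∑ i ∈ Finset.Icc 1 (m + 1 + 1), K ^ (m + 1 + 1 - i) * C i ^ 2 := by
        rw [hsum]; ring
end
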